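/- arXiv:math-ph/0412010 — 2 statements merged into one kernel-verified Lean document; each statement's English description precedes it below -/
import Mathlib

section
/- Confluence of the hypergeometric seed function: fix an integer N ≥ 1, n ∈ ℤ_{≥0}, complex parameters θ_2, …, θ_N, θ_{N+1}, θ_{N+2}, θ_{N+3} with −θ_{N+1} − θ_{N+3} − n + 1 not a nonpositive integer, a point t_1 ∈ ℂ, and t_2, …, t_N ∈ ℂ with |t_j| < 1 for j = 2, …, N. Then lim_{ε → 0⁺, ε ∈ ℝ} (θ_{N+2} − 1/ε − n)(θ_{N+3} + n) · (ε t_1) · (1 − ε t_1)^{−(θ_{N+2} − 1/ε + θ_{N+3} + 1)} · F_D(−θ_{N+3} − n, 1/ε, θ_2, …, θ_N, −θ_{N+1} − θ_{N+3} − n + 1; ε t_1, t_2, …, t_N) = −(θ_{N+3} + n) · t_1 · e^{−t_1} · Φ_D(−θ_{N+3} − n, θ_2, …, θ_N, −θ_{N+1} − θ_{N+3} − n + 1; t_1, t_2, …, t_N). Here for |w| < 1 and c ∈ ℂ, (1 − w)^c denotes exp(c · Log(1 − w)) with the principal logarithm. (That is, under the confluence substitution θ_1 ↦ 1/ε, θ_{N+2}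 ↦ θ_{N+2} − 1/ε, t_1 ↦ ε t_1, the function σ^{(1)}_{1,n} tends to −σ^{(2)}_{1,n} as ε → 0⁺.) -/
/-!
Under `β₁ = 1/ε`, `t₁ ↦ ε t₁` the `m`-th term of `F_D` is `∏_{j<m₁} (1 + jε)` times the `m`-th
term of `Φ_D`. Hence the terms converge individually as `ε → 0⁺`, and for `0 < ε ≤ ε₀` they are
dominated in norm by the terms at `ε₀`, which form an absolutely convergent `F_D` series once
`ε₀ |t₁| < 1`; Tannery's theorem then gives the limit of the series. Absolute convergence of `F_D`
on the unit polydisc comes from the polynomial bound `|(α)_M| ≤ C (M+1)^D |(γ)_M|`, valid when `γ`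
is not a nonpositive integer. The prefactor converges since `(θ_{N+2} - 1/ε) ε t₁ → -t₁` and
`ε⁻¹ log (1 - ε t₁) → -t₁`.
-/

/-- The general term of the Lauricella hypergeometric series `F_D`:
`(α)_{|m|} (β_1)_{m_1} ⋯ (β_N)_{m_N} / ((γ)_{|m|} (1)_{m_1} ⋯ (1)_{m_N}) · t^m`. -/
noncomputable def lauricellaFDTerm {N : ℕ} (α γ : ℂ) (β t : Fin N → ℂ)
    (m : Fin N → ℕ) : ℂ :=
  ((ascPochhammer ℂ (∑ i, m i)).eval α *
      ∏ i, (ascPochhammer ℂ (m i)).eval (β i)) /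
    ((ascPochhammer ℂ (∑ i, m i)).eval γ * ∏ i, (Nat.factorial (m i) : ℂ)) *
    ∏ i, t i ^ m i

/-- The general term of the degenerate Lauricella series `Φ_D` (the entry `β 0`,
i.e. "β_1", does not occur). -/
noncomputable def phiDTerm {N : ℕ} (hN : 0 < N) (α γ : ℂ) (β : Fin N → ℂ)
    (t : Fin N → ℂ) (m : Fin N → ℕ) : ℂ :=
  ((ascPochhammer ℂ (∑ i, m i)).eval α *
      ∏ i ∈ Finset.univ.erase (⟨0, hN⟩ : Fin N), (ascPochhammer ℂ (m i)).eval (β i)) /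
    ((ascPochhammer ℂ (∑ i, m i)).eval γ * ∏ i, (Nat.factorial (m i) : ℂ)) *
    ∏ i, t i ^ m i

open Finset Filter Complex
open scoped Topology

lemma ascPochhammer_eval_eq_prod_range {S : Type*} [CommSemiring S] (n : ℕ) (x : S) :
    (ascPochhammer S n).eval x = ∏ k ∈ range n, (x + k) := by
  induction n with
  | zero => simp
  | succ n ih => rw [ascPochhammer_succ_eval, ih, prod_range_succ]

lemma add_natCast_mul_pow_le_add_one_pow_mul {a : ℝ} (ha : 0 < a) (D : ℕ) :
    (a + D) * a ^ D ≤ (a + 1) ^ D * a := by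
  have hBernoulli := one_add_mul_le_pow (a := a⁻¹) (by linarith [inv_pos.2 ha]) D
  have hpow : (a + 1) ^ D = a ^ D * (1 + a⁻¹) ^ D := by
    rw [← mul_pow]; congr 1; field_simp
  rw [hpow]
  calc (a + D) * a ^ D = a ^ D * a * (1 + D * a⁻¹) := by field_simp
    _ ≤ a ^ D * a * (1 + a⁻¹) ^ D := by gcongr
    _ = _ := by ring

-- The factors `((k + 2) / (k + 1)) ^ D` telescope to `(M + 1) ^ D` in the product over `k < M`.
lemma norm_add_natCast_mul_pow_le {α γ : ℂ} {D k : ℕ} (hD : 2 * ‖α - γ‖ ≤ D)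
    (hk : 2 * ‖γ‖ + 1 ≤ k) :
    ‖α + k‖ * ((k : ℝ) + 1) ^ D ≤ ((k : ℝ) + 2) ^ D * ‖γ + k‖ := by
  have hγk : ((k : ℝ) + 1) / 2 ≤ ‖γ + k‖ := by
    have := norm_sub_le (γ + k) γ
    simp only [add_sub_cancel_left, norm_natCast] at this
    linarith
  have hαk : ‖α + k‖ ≤ ‖γ + k‖ + ‖α - γ‖ := by
    calc ‖α + k‖ = ‖(γ + k) + (α - γ)‖ := by ring_nf
      _ ≤ _ := norm_add_le _ _
  have hB := add_natCast_mul_pow_le_add_one_pow_mul (a := (k : ℝ) + 1) (by positivity) D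
  rw [show (k : ℝ) + 1 + 1 = k + 2 by ring] at hB
  have hk1 : (0 : ℝ) < k + 1 := by positivity
  refine le_of_mul_le_mul_right ?_ hk1
  calc ‖α + k‖ * ((k : ℝ) + 1) ^ D * (k + 1)
      ≤ (‖γ + k‖ + ‖α - γ‖) * (k + 1) * ((k : ℝ) + 1) ^ D := by
        rw [mul_right_comm]; gcongr
    _ ≤ ‖γ + k‖ * ((k + 1 + D) * ((k : ℝ) + 1) ^ D) := by
        rw [← mul_assoc]; gcongr ?_ * _; nlinarith [norm_nonneg (α - γ)]
    _ ≤ ‖γ + k‖ * (((k : ℝ) + 2) ^ D * (k + 1)) := by gcongr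
    _ = ((k : ℝ) + 2) ^ D * ‖γ + k‖ * (k + 1) := by ring

lemma norm_ascPochhammer_eval_pos {γ : ℂ} (hγ : ∀ k : ℕ, γ + k ≠ 0) (M : ℕ) :
    0 < ‖(ascPochhammer ℂ M).eval γ‖ := by
  rw [norm_pos_iff, ascPochhammer_eval_eq_prod_range]
  exact prod_ne_zero_iff.2 fun k _ => hγ k

lemma exists_norm_ascPochhammer_le (α γ : ℂ) (hγ : ∀ k : ℕ, γ + k ≠ 0) :
    ∃ C : ℝ, 0 ≤ C ∧ ∃ D : ℕ, ∀ M : ℕ,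
      ‖(ascPochhammer ℂ M).eval α‖ ≤ C * ((M : ℝ) + 1) ^ D * ‖(ascPochhammer ℂ M).eval γ‖ := by
  obtain ⟨D, hD⟩ : ∃ D : ℕ, 2 * ‖α - γ‖ ≤ D := ⟨_, Nat.le_ceil _⟩
  obtain ⟨K, hK⟩ : ∃ K : ℕ, 2 * ‖γ‖ + 1 ≤ K := ⟨_, Nat.le_ceil _⟩
  have hγpos := norm_ascPochhammer_eval_pos hγ
  set r : ℕ → ℝ := fun M =>
    ‖(ascPochhammer ℂ M).eval α‖ / (((M : ℝ) + 1) ^ D * ‖(ascPochhammer ℂ M).eval γ‖)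
  have hr_anti : AntitoneOn r {M | K ≤ M} := by
    refine antitoneOn_nat_Ici_of_succ_le fun M hM => ?_
    have hstep := norm_add_natCast_mul_pow_le hD (hK.trans (by exact_mod_cast hM))
    have hγM := mul_pos (hγpos M) (norm_pos_iff.2 (hγ M))
    simp only [r, ascPochhammer_succ_eval, norm_mul, Nat.cast_succ, add_assoc, one_add_one_eq_two]
    rw [div_le_div_iff₀ (mul_pos (by positivity) hγM) (mul_pos (by positivity) (hγpos M))]
    calc ‖(ascPochhammer ℂ M).eval α‖ * ‖α + M‖ * (((M : ℝ) + 1) ^ D * ‖(ascPochhammer ℂ M).eval γ‖)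
        = ‖(ascPochhammer ℂ M).eval α‖ * ‖(ascPochhammer ℂ M).eval γ‖ *
            (‖α + M‖ * ((M : ℝ) + 1) ^ D) := by ring
      _ ≤ ‖(ascPochhammer ℂ M).eval α‖ * ‖(ascPochhammer ℂ M).eval γ‖ *
            (((M : ℝ) + 2) ^ D * ‖γ + M‖) := by gcongr
      _ = _ := by ring
  refine ⟨∑ M ∈ range (K + 1), r M, sum_nonneg fun M _ => by positivity, D, fun M => ?_⟩
  have hrM : r M ≤ ∑ M ∈ range (K + 1), r M := by
    rcases le_or_gt M K with hMK | hKM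
    · exact single_le_sum (fun M _ => by positivity) (mem_range.2 (by omega))
    · exact (hr_anti (le_refl K) hKM.le hKM.le).trans
        (single_le_sum (fun M _ => by positivity) (self_mem_range_succ K))
  rwa [div_le_iff₀ (mul_pos (by positivity) (hγpos M)), ← mul_assoc] at hrM

lemma exists_norm_ascPochhammer_le_factorial (β : ℂ) :
    ∃ C : ℝ, 0 ≤ C ∧ ∃ D : ℕ, ∀ k : ℕ,
      ‖(ascPochhammer ℂ k).eval β‖ ≤ C * ((k : ℝ) + 1) ^ D * k.factorial := by
  obtain ⟨C, hC, D, h⟩ := exists_norm_ascPochhammer_le β 1 fun k => by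
    norm_cast; omega
  refine ⟨C, hC, D, fun k => ?_⟩
  simpa [ascPochhammer_eval_one] using h k

lemma summable_add_one_pow_mul_geometric (D : ℕ) {ρ : ℝ} (h0 : 0 ≤ ρ) (h1 : ρ < 1) :
    Summable fun k : ℕ => ((k : ℝ) + 1) ^ D * ρ ^ k := by
  refine (summable_descFactorial_mul_geometric_of_norm_lt_one D
    (by rwa [Real.norm_of_nonneg h0])).of_nonneg_of_le (fun k => by positivity) fun k => ?_
  rw [Nat.add_descFactorial_eq_ascFactorial]
  gcongr
  exact_mod_cast Nat.pow_succ_le_ascFactorial (k + 1) D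

lemma summable_fin_prod_of_nonneg {κ : Type*} :
    ∀ {N : ℕ} {f : Fin N → κ → ℝ}, (∀ i k, 0 ≤ f i k) → (∀ i, Summable (f i)) →
      Summable fun m : Fin N → κ => ∏ i, f i (m i)
  | 0, _, _, _ => .of_finite
  | N + 1, f, hf0, hf => by
    rw [← (Fin.consEquiv fun _ : Fin (N + 1) => κ).summable_iff]
    have hs := (hf 0).mul_of_nonneg
      (summable_fin_prod_of_nonneg (f := fun i => f i.succ) (fun _ _ => hf0 _ _) fun i => hf i.succ)
      (hf0 0) fun _ => prod_nonneg fun _ _ => hf0 _ _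
    refine hs.congr fun p => ?_
    simp [Fin.prod_univ_succ]

lemma sum_add_one_le_prod_add_one {ι : Type*} (s : Finset ι) (m : ι → ℕ) :
    ∑ i ∈ s, m i + 1 ≤ ∏ i ∈ s, (m i + 1) := by
  classical
  induction s using Finset.induction_on with
  | empty => simp
  | insert a s ha ih =>
    rw [sum_insert ha, prod_insert ha]
    calc m a + ∑ i ∈ s, m i + 1 ≤ (m a + 1) * (∑ i ∈ s, m i + 1) := by
          nlinarith [Nat.zero_le (m a * ∑ i ∈ s, m i)]
      _ ≤ (m a + 1) * ∏ i ∈ s, (m i + 1) := Nat.mul_le_mul_left _ ih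

lemma norm_lauricellaFDTerm {N : ℕ} (α γ : ℂ) (β t : Fin N → ℂ) (m : Fin N → ℕ) :
    ‖lauricellaFDTerm α γ β t m‖
      = ‖(ascPochhammer ℂ (∑ i, m i)).eval α‖ / ‖(ascPochhammer ℂ (∑ i, m i)).eval γ‖ *
        ∏ i, ‖(ascPochhammer ℂ (m i)).eval (β i)‖ * ‖t i‖ ^ m i / (m i).factorial := by
  simp only [lauricellaFDTerm, norm_mul, norm_div, norm_prod, norm_pow, norm_natCast,
    prod_div_distrib, prod_mul_distrib]
  ring

theorem summable_norm_lauricellaFDTerm {N : ℕ} (α γ : ℂ) (β t : Fin N → ℂ)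
    (hγ : ∀ k : ℕ, γ + k ≠ 0) (ht : ∀ i, ‖t i‖ < 1) :
    Summable fun m => ‖lauricellaFDTerm α γ β t m‖ := by
  obtain ⟨C, hC, D, hαγ⟩ := exists_norm_ascPochhammer_le α γ hγ
  choose Cβ hCβ Dβ hβ using fun i => exists_norm_ascPochhammer_le_factorial (β i)
  set g : Fin N → ℕ → ℝ := fun i k => Cβ i * (((k : ℝ) + 1) ^ (D + Dβ i) * ‖t i‖ ^ k)
  have hg : Summable fun m : Fin N → ℕ => C * ∏ i, g i (m i) :=
    (summable_fin_prod_of_nonneg (fun i k => mul_nonneg (hCβ i) (by positivity)) fun i =>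
      (summable_add_one_pow_mul_geometric _ (norm_nonneg _) (ht i)).mul_left _).mul_left C
  refine hg.of_nonneg_of_le (fun _ => norm_nonneg _) fun m => ?_
  have hsum : ((∑ i, m i : ℕ) : ℝ) + 1 ≤ ∏ i, ((m i : ℝ) + 1) := by
    exact_mod_cast sum_add_one_le_prod_add_one univ m
  have hfactor : ∀ i, ((m i : ℝ) + 1) ^ D *
      (‖(ascPochhammer ℂ (m i)).eval (β i)‖ * ‖t i‖ ^ m i / (m i).factorial) ≤ g i (m i) := by
    intro i
    have := (m i).factorial_pos
    calc ((m i : ℝ) + 1) ^ D *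
          (‖(ascPochhammer ℂ (m i)).eval (β i)‖ * ‖t i‖ ^ m i / (m i).factorial)
        ≤ ((m i : ℝ) + 1) ^ D *
          (Cβ i * ((m i : ℝ) + 1) ^ Dβ i * (m i).factorial * ‖t i‖ ^ m i / (m i).factorial) := by
          gcongr; exact hβ i (m i)
      _ = g i (m i) := by simp only [g]; field_simp; ring
  rw [norm_lauricellaFDTerm]
  calc _ ≤ C * ((∑ i, m i : ℕ) + 1 : ℝ) ^ D *
        ∏ i, ‖(ascPochhammer ℂ (m i)).eval (β i)‖ * ‖t i‖ ^ m i / (m i).factorial := by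
        gcongr
        rw [div_le_iff₀ (norm_ascPochhammer_eval_pos hγ _)]
        exact hαγ _
    _ ≤ C * (∏ i, ((m i : ℝ) + 1)) ^ D *
        ∏ i, ‖(ascPochhammer ℂ (m i)).eval (β i)‖ * ‖t i‖ ^ m i / (m i).factorial := by
        gcongr
    _ = C * ∏ i, ((m i : ℝ) + 1) ^ D *
        (‖(ascPochhammer ℂ (m i)).eval (β i)‖ * ‖t i‖ ^ m i / (m i).factorial) := by
        rw [← prod_pow, mul_assoc, ← prod_mul_distrib]
    _ ≤ C * ∏ i, g i (m i) := by
        gcongr with i; exact hfactor i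

section Confluence

variable {N : ℕ} (hN : 0 < N) (α γ : ℂ) (β t : Fin N → ℂ)

lemma lauricellaFDTerm_update_inv_update_mul {ε : ℂ} (hε : ε ≠ 0) (m : Fin N → ℕ) :
    lauricellaFDTerm α γ (Function.update β ⟨0, hN⟩ ε⁻¹)
        (Function.update t ⟨0, hN⟩ (ε * t ⟨0, hN⟩)) m
      = (∏ j ∈ range (m ⟨0, hN⟩), (1 + j * ε)) * phiDTerm hN α γ β t m := by
  set z : Fin N := ⟨0, hN⟩
  have hβ : ∏ i, (ascPochhammer ℂ (m i)).eval (Function.update β z ε⁻¹ i)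
      = (∏ j ∈ range (m z), (ε⁻¹ + j)) *
        ∏ i ∈ univ.erase z, (ascPochhammer ℂ (m i)).eval (β i) := by
    rw [← mul_prod_erase univ _ (mem_univ z), Function.update_self,
      ascPochhammer_eval_eq_prod_range]
    congr 1
    exact prod_congr rfl fun i hi => by rw [Function.update_of_ne (ne_of_mem_erase hi)]
  have ht : ∏ i, Function.update t z (ε * t z) i ^ m i
      = ε ^ m z * ∏ i, t i ^ m i := by
    rw [← mul_prod_erase univ _ (mem_univ z), ← mul_prod_erase univ (fun i => t i ^ m i)
      (mem_univ z), Function.update_self, mul_pow, mul_assoc]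
    congr 2
    exact prod_congr rfl fun i hi => by rw [Function.update_of_ne (ne_of_mem_erase hi)]
  have hscale : (∏ j ∈ range (m z), (ε⁻¹ + j)) * ε ^ m z = ∏ j ∈ range (m z), (1 + j * ε) := by
    rw [show ε ^ m z = ∏ _j ∈ range (m z), ε by simp, ← prod_mul_distrib]
    exact prod_congr rfl fun j _ => by field_simp
  simp only [lauricellaFDTerm, phiDTerm, hβ, ht, ← hscale]
  ring

lemma norm_lauricellaFDTerm_update_inv_update_mul_le {ε ε₀ : ℝ} (hε : 0 < ε) (hεε₀ : ε ≤ ε₀)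
    (m : Fin N → ℕ) :
    ‖lauricellaFDTerm α γ (Function.update β ⟨0, hN⟩ (ε : ℂ)⁻¹)
        (Function.update t ⟨0, hN⟩ (ε * t ⟨0, hN⟩)) m‖
      ≤ ‖lauricellaFDTerm α γ (Function.update β ⟨0, hN⟩ (ε₀ : ℂ)⁻¹)
        (Function.update t ⟨0, hN⟩ (ε₀ * t ⟨0, hN⟩)) m‖ := by
  have hε₀ : 0 < ε₀ := hε.trans_le hεε₀
  have hnorm : ∀ e : ℝ, 0 < e → ‖∏ j ∈ range (m ⟨0, hN⟩), (1 + j * (e : ℂ))‖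
      = ∏ j ∈ range (m ⟨0, hN⟩), (1 + j * e) := fun e he => by
    rw [norm_prod]
    exact prod_congr rfl fun j _ => by
      rw [show 1 + j * (e : ℂ) = ((1 + j * e : ℝ) : ℂ) by push_cast; ring,
        norm_real, Real.norm_of_nonneg (by positivity)]
  simp only [lauricellaFDTerm_update_inv_update_mul hN α γ β t (ofReal_ne_zero.2 hε.ne'),
    lauricellaFDTerm_update_inv_update_mul hN α γ β t (ofReal_ne_zero.2 hε₀.ne'), norm_mul,
    hnorm ε hε, hnorm ε₀ hε₀]
  gcongr

theorem tendsto_tsum_lauricellaFDTerm_confluent (hγ : ∀ k : ℕ, γ + k ≠ 0)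
    (ht : ∀ i, i ≠ ⟨0, hN⟩ → ‖t i‖ < 1) :
    Tendsto (fun ε : ℝ => ∑' m, lauricellaFDTerm α γ (Function.update β ⟨0, hN⟩ (ε : ℂ)⁻¹)
        (Function.update t ⟨0, hN⟩ (ε * t ⟨0, hN⟩)) m)
      (𝓝[>] 0) (𝓝 (∑' m, phiDTerm hN α γ β t m)) := by
  set z : Fin N := ⟨0, hN⟩
  set ε₀ : ℝ := (‖t z‖ + 1)⁻¹
  have hε₀ : 0 < ε₀ := by positivity
  have ht₀ : ∀ i, ‖Function.update t z (ε₀ * t z) i‖ < 1 := by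
    intro i
    rcases eq_or_ne i z with rfl | hi
    · rw [Function.update_self, norm_mul, norm_real, Real.norm_of_nonneg hε₀.le,
        inv_mul_lt_one₀ (by positivity)]
      linarith
    · rw [Function.update_of_ne hi]; exact ht i hi
  have hlim : ∀ m, Tendsto (fun ε : ℝ => lauricellaFDTerm α γ
      (Function.update β z (ε : ℂ)⁻¹) (Function.update t z (ε * t z)) m)
      (𝓝[>] 0) (𝓝 (phiDTerm hN α γ β t m)) := by
    intro m
    have hprod : Tendsto (fun ε : ℝ => ∏ j ∈ range (m z), (1 + j * (ε : ℂ))) (𝓝[>] 0) (𝓝 1) := by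
      refine tendsto_nhdsWithin_of_tendsto_nhds ?_
      simpa using (continuous_finsetProd (range (m z)) fun j _ =>
        ((continuous_ofReal.const_mul (j : ℂ)).const_add 1)).tendsto 0
    have h := hprod.mul_const (phiDTerm hN α γ β t m)
    rw [one_mul] at h
    refine h.congr' ?_
    filter_upwards [self_mem_nhdsWithin] with ε hε
    exact (lauricellaFDTerm_update_inv_update_mul hN α γ β t (ofReal_ne_zero.2 hε.ne') m).symm
  refine tendsto_tsum_of_dominated_convergence
    (summable_norm_lauricellaFDTerm α γ (Function.update β z (ε₀ : ℂ)⁻¹) _ hγ ht₀) hlim ?_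
  filter_upwards [Ioc_mem_nhdsGT hε₀] with ε hε
  exact norm_lauricellaFDTerm_update_inv_update_mul_le hN α γ β t hε.1 hε.2

end Confluence

lemma tendsto_inv_mul_log_one_sub_mul (t : ℂ) :
    Tendsto (fun ε : ℝ => (ε : ℂ)⁻¹ * log (1 - ε * t)) (𝓝[>] 0) (𝓝 (-t)) := by
  have hg : Tendsto (fun x : ℝ => x * (-t / x)) atTop (𝓝 (-t)) :=
    tendsto_const_nhds.congr' <| by
      filter_upwards [eventually_ne_atTop 0] with x hx
      rw [mul_div_cancel₀ _ (ofReal_ne_zero.2 hx)]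
  refine ((tendsto_mul_log_one_add_of_tendsto hg).comp tendsto_inv_nhdsGT_zero).congr fun ε => ?_
  simp [div_inv_eq_mul, sub_eq_add_neg, mul_comm]

lemma tendsto_confluent_prefactor (A K B t : ℂ) :
    Tendsto (fun ε : ℝ => (A - (ε : ℂ)⁻¹) * K * (ε * t) *
        exp (-(B - (ε : ℂ)⁻¹) * log (1 - ε * t)))
      (𝓝[>] 0) (𝓝 (-K * t * exp (-t))) := by
  have hpoly : Tendsto (fun ε : ℝ => (A - (ε : ℂ)⁻¹) * K * (ε * t)) (𝓝[>] 0) (𝓝 (-K * t)) := by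
    have h : Tendsto (fun ε : ℝ => (A * ε - 1) * K * t) (𝓝 0) (𝓝 (-K * t)) := by
      simpa using (by fun_prop : Continuous fun ε : ℝ => (A * ε - 1) * K * t).tendsto 0
    refine (tendsto_nhdsWithin_of_tendsto_nhds h).congr' ?_
    filter_upwards [self_mem_nhdsWithin] with ε hε
    field_simp [ofReal_ne_zero.2 (ne_of_gt hε)]
  have hlog : Tendsto (fun ε : ℝ => log (1 - ε * t)) (𝓝[>] 0) (𝓝 0) := by
    refine tendsto_nhdsWithin_of_tendsto_nhds ?_
    simpa [Function.comp_def] using ((continuousAt_clog (x := 1) (by simp)).comp_of_eq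
      (by fun_prop : Continuous fun ε : ℝ => 1 - ε * t).continuousAt (x := 0)
      (by simp)).tendsto
  have hexponent : Tendsto (fun ε : ℝ => -(B - (ε : ℂ)⁻¹) * log (1 - ε * t))
      (𝓝[>] 0) (𝓝 (-t)) := by
    simpa [neg_sub, sub_mul] using
      (tendsto_inv_mul_log_one_sub_mul t).sub (hlog.const_mul B)
  exact hpoly.mul ((continuous_exp.tendsto _).comp hexponent)

/-- **Confluence of the hypergeometric seed function** `σ⁽¹⁾_{1,n} → −σ⁽²⁾_{1,n}`:
under the substitution `θ_1 ↦ 1/ε`, `θ_{N+2} ↦ θ_{N+2} − 1/ε`, `t_1 ↦ ε t_1`, as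
`ε → 0⁺` one has
`(θ_{N+2} − 1/ε − n)(θ_{N+3} + n) (ε t_1) (1 − ε t_1)^{−(θ_{N+2} − 1/ε + θ_{N+3} + 1)}
  F_D(−θ_{N+3} − n, 1/ε, θ_2, …, θ_N, −θ_{N+1} − θ_{N+3} − n + 1; ε t_1, t_2, …, t_N)
  → −(θ_{N+3} + n) t_1 e^{−t_1}
  Φ_D(−θ_{N+3} − n, θ_2, …, θ_N, −θ_{N+1} − θ_{N+3} − n + 1; t_1, …, t_N)`,
where `(1 − w)^c := exp (c · Log (1 − w))` with the principal logarithm.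
Here `θ : ℕ → ℂ` carries the parameters `θ_2, …, θ_{N+3}` (entries with other indices
are unused), `t ⟨0, hN⟩` is `t_1`, and the slot `β i = θ (i+1)` for `i ≠ 0` furnishes
`θ_2, …, θ_N` (the slot `i = 0` is overwritten by `1/ε` in `F_D` and unused in `Φ_D`). -/
theorem seed_confluence (N : ℕ) (hN : 0 < N) (n : ℕ) (θ : ℕ → ℂ)
    (hγ : ∀ k : ℕ, -θ (N + 1) - θ (N + 3) - (n : ℂ) + 1 ≠ -(k : ℂ))
    (t : Fin N → ℂ) (ht : ∀ i : Fin N, i ≠ ⟨0, hN⟩ → ‖t i‖ < 1) :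
    Filter.Tendsto
      (fun ε : ℝ =>
        (θ (N + 2) - (ε : ℂ)⁻¹ - (n : ℂ)) * (θ (N + 3) + (n : ℂ)) *
          ((ε : ℂ) * t ⟨0, hN⟩) *
          Complex.exp (-(θ (N + 2) - (ε : ℂ)⁻¹ + θ (N + 3) + 1) *
            Complex.log (1 - (ε : ℂ) * t ⟨0, hN⟩)) *
          ∑' m : Fin N → ℕ,
            lauricellaFDTerm (-θ (N + 3) - (n : ℂ))
              (-θ (N + 1) - θ (N + 3) - (n : ℂ) + 1)
              (Function.update (fun i : Fin N => θ ((i : ℕ) + 1)) ⟨0, hN⟩ ((ε : ℂ)⁻¹))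
              (Function.update t ⟨0, hN⟩ ((ε : ℂ) * t ⟨0, hN⟩)) m)
      (nhdsWithin 0 (Set.Ioi 0))
      (nhds (-(θ (N + 3) + (n : ℂ)) * t ⟨0, hN⟩ * Complex.exp (-t ⟨0, hN⟩) *
        ∑' m : Fin N → ℕ,
          phiDTerm hN (-θ (N + 3) - (n : ℂ))
            (-θ (N + 1) - θ (N + 3) - (n : ℂ) + 1)
            (fun i : Fin N => θ ((i : ℕ) + 1)) t m)) := by
  have hγ' : ∀ k : ℕ, -θ (N + 1) - θ (N + 3) - (n : ℂ) + 1 + k ≠ 0 := fun k h =>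
    hγ k (by linear_combination h)
  have hseries := tendsto_tsum_lauricellaFDTerm_confluent hN (-θ (N + 3) - n)
    (-θ (N + 1) - θ (N + 3) - n + 1) (fun i : Fin N => θ ((i : ℕ) + 1)) t hγ' ht
  have hprefactor := tendsto_confluent_prefactor (θ (N + 2) - n) (θ (N + 3) + n)
    (θ (N + 2) + θ (N + 3) + 1) (t ⟨0, hN⟩)
  refine (hprefactor.mul hseries).congr fun ε => ?_
  rw [show θ (N + 2) + θ (N + 3) + 1 - (ε : ℂ)⁻¹ = θ (N + 2) - (ε : ℂ)⁻¹ + θ (N + 3) + 1 by ring]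
  ring
end

section
/- Conservation of traces along the degenerate Schlesinger flow: let A_1, …, A_{N+2} : U → M_2(ℂ) be holomorphic maps solving the degenerate Schlesinger system S(1,…,1,2;N) on the connected open set U. Then for each j = 2, …, N+2 the function t ↦ tr A_j(t) is constant on U, and there exists a constant c ∈ ℂ such that tr A_1(t) = c · t_1 for all t ∈ U. -/
open Finset

/-- Entrywise partial derivative of a matrix-valued map in the `k`-th coordinate
direction. -/
noncomputable def pder {N : ℕ} (k : Fin N)
    (f : (Fin N → ℂ) → Matrix (Fin 2) (Fin 2) ℂ) (t : Fin N → ℂ) :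
    Matrix (Fin 2) (Fin 2) ℂ :=
  Matrix.of fun a b => fderiv ℂ (fun s => f s a b) t (Pi.single k 1)

/-- Matrix commutator `[X, Y] = XY − YX`. -/
noncomputable def mComm (X Y : Matrix (Fin 2) (Fin 2) ℂ) : Matrix (Fin 2) (Fin 2) ℂ :=
  X * Y - Y * X

/-- The value `t_j` for the classical index `j ∈ {1, …, N+2}`: the coordinate
`t ⟨j−1⟩` for `1 ≤ j ≤ N`, and the frozen values `t_{N+1} = 1`, `t_{N+2} = 0`. -/
def tval {N : ℕ} (t : Fin N → ℂ) (j : ℕ) : ℂ :=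
  if h : 1 ≤ j ∧ j ≤ N then t ⟨j - 1, by omega⟩ else if j = N + 1 then 1 else 0

/-- The set of points `t ∈ ℂ^N` with `t_i ≠ 0`, `t_i ≠ 1` and `t_i ≠ t_j` for `i ≠ j`. -/
def goodDomain (N : ℕ) : Set (Fin N → ℂ) :=
  {t | (∀ i, t i ≠ 0 ∧ t i ≠ 1) ∧ ∀ i j, i ≠ j → t i ≠ t j}

/-- `A 1, …, A (N+2) : U → M₂(ℂ)` solve the degenerate Schlesinger system
`S(1,…,1,2;N)`: each entry is holomorphic on `U`, and the partial differential
equations obtained by equating coefficients of `dt_1, …, dt_N` in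
`dA_1 = Σ_{i=2}^{N+1} [A_i, A_1] d log t_i + (A_1 + [A_{N+2}, A_1]) d log t_1`,
`dA_j = Σ_{i=2,i≠j}^{N+2} [A_i, A_j] d log(t_j − t_i) + ([A_1,A_j]/t_j) d log(t_j/t_1)`
for `j = 2, …, N+1`, and
`dA_{N+2} = Σ_{i=2}^{N+1} (([A_i,A_1]/t_i) d log(t_i/t_1) + [A_i,A_{N+2}] d log t_i)`
hold on `U` (with `t_{N+1} = 1`, `t_{N+2} = 0` held constant).  The coordinate
`k : Fin N` represents the variable `t_{k+1}`. -/
def SolvesDegSch {N : ℕ} (U : Set (Fin N → ℂ))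
    (A : ℕ → (Fin N → ℂ) → Matrix (Fin 2) (Fin 2) ℂ) : Prop :=
  (∀ j ∈ Icc 1 (N + 2), ∀ a b : Fin 2, DifferentiableOn ℂ (fun t => A j t a b) U) ∧
  ∀ t ∈ U, ∀ k : Fin N,
    (pder k (A 1) t =
      if (k : ℕ) = 0 then (t k)⁻¹ • (A 1 t + mComm (A (N + 2) t) (A 1 t))
      else (t k)⁻¹ • mComm (A ((k : ℕ) + 1) t) (A 1 t)) ∧
    (∀ j ∈ Icc 2 (N + 1),
      pder k (A j) t =
        if (k : ℕ) + 1 = j then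
          (∑ i ∈ (Icc 2 (N + 2)).erase j,
            (tval t j - tval t i)⁻¹ • mComm (A i t) (A j t)) +
            ((tval t j) ^ 2)⁻¹ • mComm (A 1 t) (A j t)
        else if (k : ℕ) = 0 then
          (-(tval t j * t k)⁻¹) • mComm (A 1 t) (A j t)
        else (-(tval t j - t k)⁻¹) • mComm (A ((k : ℕ) + 1) t) (A j t)) ∧
    (pder k (A (N + 2)) t =
      if (k : ℕ) = 0 then
        ∑ i ∈ Icc 2 (N + 1), (-(tval t i * t k)⁻¹) • mComm (A i t) (A 1 t)
      else ((t k) ^ 2)⁻¹ • mComm (A ((k : ℕ) + 1) t) (A 1 t) +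
        (t k)⁻¹ • mComm (A ((k : ℕ) + 1) t) (A (N + 2) t))

/-!
The right-hand sides of the degenerate Schlesinger system are commutators, except for the
term `A₁ d log t₁` in the equation for `A₁`. Commutators are traceless, so `d tr A_j = 0`
for `j ≥ 2`, while `d tr A₁ = tr A₁ · dt₁ / t₁`; the latter says exactly that `tr A₁ / t₁`
has vanishing differential. On a connected open set both give constancy.
-/

lemma trace_mComm (X Y : Matrix (Fin 2) (Fin 2) ℂ) : (mComm X Y).trace = 0 := by
  rw [mComm, Matrix.trace_sub, Matrix.trace_mul_comm, sub_self]

lemma ContinuousLinearMap.ext_pi_single {ι R M : Type*} [Finite ι] [DecidableEq ι]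
    [Semiring R] [TopologicalSpace R] [AddCommMonoid M] [Module R M] [TopologicalSpace M]
    {L L' : (ι → R) →L[R] M} (h : ∀ i, L (Pi.single i 1) = L' (Pi.single i 1)) : L = L' :=
  ContinuousLinearMap.coe_injective <| (Pi.basisFun R ι).ext fun i => by simpa using h i

theorem IsOpen.exists_eq_const_mul_of_fderiv_eq {E : Type*} [NormedAddCommGroup E]
    [NormedSpace ℂ E] {s : Set E} {g : E → ℂ} (ℓ : E →L[ℂ] ℂ)
    (hs : IsOpen s) (hs' : IsPreconnected s) (hg : DifferentiableOn ℂ g s)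
    (hℓ : ∀ x ∈ s, ℓ x ≠ 0) (hg' : ∀ x ∈ s, fderiv ℂ g x = (g x / ℓ x) • ℓ) :
    ∃ c, ∀ x ∈ s, g x = c * ℓ x := by
  obtain ⟨c, hc⟩ := hs.exists_is_const_of_fderiv_eq_zero (f := fun x => g x * (ℓ x)⁻¹) hs'
    (hg.mul (ℓ.differentiableOn.inv hℓ)) fun x hx => by
      have hinv : HasFDerivAt (fun y => (ℓ y)⁻¹) ((-(ℓ x ^ 2)⁻¹) • ℓ) x :=
        (hasDerivAt_inv (hℓ x hx)).comp_hasFDerivAt x ℓ.hasFDerivAt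
      have hquot := ((hg x hx).differentiableAt (hs.mem_nhds hx)).hasFDerivAt.fun_mul hinv
      rw [hquot.fderiv, hg' x hx]
      ext v
      simp [field]
  exact ⟨c, fun x hx => by rw [← hc x hx, inv_mul_cancel_right₀ (hℓ x hx)]⟩

section

variable {N : ℕ}

lemma differentiableOn_trace {f : (Fin N → ℂ) → Matrix (Fin 2) (Fin 2) ℂ} {U : Set (Fin N → ℂ)}
    (hf : ∀ a b, DifferentiableOn ℂ (fun s => f s a b) U) :
    DifferentiableOn ℂ (fun s => (f s).trace) U := by
  simp only [Matrix.trace_fin_two]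
  exact (hf 0 0).add (hf 1 1)

lemma fderiv_trace_eq {f : (Fin N → ℂ) → Matrix (Fin 2) (Fin 2) ℂ} {t : Fin N → ℂ}
    (hf : ∀ a b, DifferentiableAt ℂ (fun s => f s a b) t) (L : (Fin N → ℂ) →L[ℂ] ℂ)
    (hL : ∀ k, (pder k f t).trace = L (Pi.single k 1)) :
    fderiv ℂ (fun s => (f s).trace) t = L := by
  refine ContinuousLinearMap.ext_pi_single fun k => ?_
  simp only [Matrix.trace_fin_two] at hL ⊢
  rw [fderiv_fun_add (hf 0 0) (hf 1 1), ← hL]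
  rfl

end

namespace SolvesDegSch

variable {N : ℕ} {U : Set (Fin N → ℂ)} {A : ℕ → (Fin N → ℂ) → Matrix (Fin 2) (Fin 2) ℂ}
  {t : Fin N → ℂ}

lemma differentiableAt (hsol : SolvesDegSch U A) (hU : IsOpen U) {j : ℕ}
    (hj : j ∈ Icc 1 (N + 2)) (ht : t ∈ U) (a b : Fin 2) :
    DifferentiableAt ℂ (fun s => A j s a b) t :=
  (hsol.1 j hj a b).differentiableAt (hU.mem_nhds ht)

lemma fderiv_trace_eq_zero (hsol : SolvesDegSch U A) (hU : IsOpen U) {j : ℕ}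
    (hj : j ∈ Icc 2 (N + 2)) (ht : t ∈ U) :
    fderiv ℂ (fun s => (A j s).trace) t = 0 := by
  have hj' : j ∈ Icc 1 (N + 2) := Icc_subset_Icc_left one_le_two hj
  refine fderiv_trace_eq (hsol.differentiableAt hU hj' ht) 0 fun k => ?_
  obtain ⟨-, hpde_j, hpde_last⟩ := hsol.2 t ht k
  rcases eq_or_ne j (N + 2) with rfl | hj_ne
  · rw [hpde_last]
    split_ifs <;> simp [Matrix.trace_sum, trace_mComm]
  · rw [hpde_j j (by grind)]
    split_ifs <;> simp [Matrix.trace_sum, trace_mComm]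

lemma fderiv_trace_one (hsol : SolvesDegSch U A) (hU : IsOpen U) (hN : 0 < N) (ht : t ∈ U) :
    fderiv ℂ (fun s => (A 1 s).trace) t =
      ((A 1 t).trace / t ⟨0, hN⟩) • ContinuousLinearMap.proj ⟨0, hN⟩ := by
  refine fderiv_trace_eq (hsol.differentiableAt hU (by simp) ht) _ fun k => ?_
  rw [(hsol.2 t ht k).1]
  split_ifs with hk
  · obtain rfl : k = ⟨0, hN⟩ := Fin.ext hk
    simp [trace_mComm, div_eq_inv_mul]
  · have hk' : (⟨0, hN⟩ : Fin N) ≠ k := fun h => hk (by rw [← h])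
    simp [trace_mComm, Pi.single_eq_of_ne hk']

end SolvesDegSch

/-- **Conservation of traces along the degenerate Schlesinger flow**: if
`A_1, …, A_{N+2}` solve `S(1,…,1,2;N)` on a connected open `U` contained in the good
domain, then `tr A_j` is constant on `U` for each `j = 2, …, N+2`, and there is a
constant `c ∈ ℂ` with `tr A_1(t) = c · t_1` on `U`. -/
theorem degSch_traces_conserved (N : ℕ) (hN : 0 < N) (U : Set (Fin N → ℂ))
    (hUopen : IsOpen U) (hUconn : IsConnected U) (hUsub : U ⊆ goodDomain N)
    (A : ℕ → (Fin N → ℂ) → Matrix (Fin 2) (Fin 2) ℂ)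
    (hsol : SolvesDegSch U A) :
    (∀ j ∈ Icc 2 (N + 2), ∃ c : ℂ, ∀ t ∈ U, (A j t).trace = c) ∧
    (∃ c : ℂ, ∀ t ∈ U, (A 1 t).trace = c * t ⟨0, hN⟩) := by
  have hU := hUconn.isPreconnected
  refine ⟨fun j hj => ?_, ?_⟩
  · exact hUopen.exists_is_const_of_fderiv_eq_zero hU
      (differentiableOn_trace (hsol.1 j (Icc_subset_Icc_left one_le_two hj)))
      fun t ht => hsol.fderiv_trace_eq_zero hUopen hj ht
  · have ht₁ (t) (ht : t ∈ U) : t ⟨0, hN⟩ ≠ 0 := ((hUsub ht).1 _).1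
    exact hUopen.exists_eq_const_mul_of_fderiv_eq
      (ContinuousLinearMap.proj (R := ℂ) (φ := fun _ : Fin N => ℂ) ⟨0, hN⟩) hU
      (differentiableOn_trace (hsol.1 1 (by simp))) ht₁
      fun t ht => hsol.fderiv_trace_one hUopen hN ht
end
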